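/- There exists a constant C_0 > 0, independent of all parameters, such that for all integers m ≥ 0 and all even integers l ≥ 0 with s := m + l/2 ≥ 1, one has T_{m,l} ≤ (l + 1) exp(−C_0 l²/s) T_{s,0}. -/

import Mathlib

open Finset

noncomputable section

/-- The height after `t` steps of the walk with up (`true`) / down (`false`) step sequence
`ε`; each trajectory `x ∈ 𝒯_{m,l}` is identified with its sequence of `±1` steps, and
`heightF ε t = x(t)`. -/
def heightF {L : ℕ} (ε : Fin L → Bool) (t : ℕ) : ℤ :=
  ∑ s ∈ Finset.range t, if h : s < L then (if ε ⟨s, h⟩ then 1 else -1) else 0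

open scoped Classical in
/-- The set `𝒯_{m,l}` of trajectories of a simple walk of length `L = l + 2m` on the
nonnegative half-lattice, starting at `0` and ending at level `l` (hence with `l + m` up
steps and `m` down steps), identified with their step sequences. -/
def trajFinset (m l : ℕ) : Finset (Fin (l + 2 * m) → Bool) :=
  Finset.univ.filter (fun ε =>
    heightF ε (l + 2 * m) = l ∧ ∀ t ≤ l + 2 * m, 0 ≤ heightF ε t)

/-- `T_{m,l}`, the number of trajectories in `𝒯_{m,l}`. -/
def T (m l : ℕ) : ℕ := (trajFinset m l).card

/-! The reflection principle (reflect the part of a walk before it first reaches `-1`) gives the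
ballot formula `(m + l + 1) T_{m,l} = (l + 1) C(l + 2m, m)`. With `s = m + q` this turns
`T_{m,2q} / T_{s,0}` into `(2q + 1)(s + 1)/(s + q + 1)` times `C(2s, s - q) / C(2s, s)`, and the
latter is `∏_{j<q} (s - j)/(s + j + 1) ≤ exp (-q² / (2s))`, since each factor is at most
`exp (-(2j + 1)/(2s))`. Hence `C₀ = 1/8` works. -/

lemma Int.exists_eq_of_le_of_succ_le_add_one {f : ℕ → ℤ} (hf : ∀ n, f (n + 1) ≤ f n + 1)
    {a : ℤ} {t : ℕ} (h0 : f 0 ≤ a) (ht : a ≤ f t) : ∃ u ≤ t, f u = a := by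
  induction t with
  | zero => exact ⟨0, le_rfl, by omega⟩
  | succ t ih =>
    by_cases h : a ≤ f t
    · obtain ⟨u, hu, rfl⟩ := ih h
      exact ⟨u, by omega, rfl⟩
    · exact ⟨t + 1, le_rfl, by have := hf t; omega⟩

section Walk

variable {L : ℕ}

lemma heightF_zero (ε : Fin L → Bool) : heightF ε 0 = 0 := by simp [heightF]

lemma heightF_succ (ε : Fin L → Bool) (t : ℕ) :
    heightF ε (t + 1) =
      heightF ε t + (if h : t < L then (if ε ⟨t, h⟩ then 1 else -1) else 0) :=
  sum_range_succ _ _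

lemma heightF_succ_le (ε : Fin L → Bool) (t : ℕ) : heightF ε (t + 1) ≤ heightF ε t + 1 := by
  rw [heightF_succ]
  split_ifs <;> omega

lemma heightF_le_succ (ε : Fin L → Bool) (t : ℕ) : heightF ε t ≤ heightF ε (t + 1) + 1 := by
  rw [heightF_succ]
  split_ifs <;> omega

lemma exists_heightF_eq_of_le {ε : Fin L → Bool} {a : ℤ} {t : ℕ} (ha : 0 ≤ a)
    (ht : a ≤ heightF ε t) : ∃ u ≤ t, heightF ε u = a :=
  Int.exists_eq_of_le_of_succ_le_add_one (heightF_succ_le ε) (by rwa [heightF_zero]) ht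

lemma exists_heightF_eq_of_ge {ε : Fin L → Bool} {a : ℤ} {t : ℕ} (ha : a ≤ 0)
    (ht : heightF ε t ≤ a) : ∃ u ≤ t, heightF ε u = a := by
  obtain ⟨u, hut, hu⟩ := Int.exists_eq_of_le_of_succ_le_add_one (f := fun n => -heightF ε n)
    (fun n => by linarith [heightF_le_succ ε n]) (a := -a) (by simpa [heightF_zero]) (by simpa)
  exact ⟨u, hut, by linarith⟩

def flipBefore (c : ℕ) (ε : Fin L → Bool) : Fin L → Bool :=
  fun i => if (i : ℕ) < c then !ε i else ε i

lemma flipBefore_flipBefore (c : ℕ) (ε : Fin L → Bool) :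
    flipBefore c (flipBefore c ε) = ε := by
  funext i
  unfold flipBefore
  split_ifs <;> simp

lemma flipBefore_of_lt {c : ℕ} (ε : Fin L → Bool) {i : Fin L} (hi : (i : ℕ) < c) :
    flipBefore c ε i = !ε i := if_pos hi

lemma flipBefore_of_ge {c : ℕ} (ε : Fin L → Bool) {i : Fin L} (hi : c ≤ (i : ℕ)) :
    flipBefore c ε i = ε i := if_neg (by omega)

lemma heightF_flipBefore_of_le (c : ℕ) (ε : Fin L → Bool) {t : ℕ} (ht : t ≤ c) :
    heightF (flipBefore c ε) t = -heightF ε t := by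
  induction t with
  | zero => simp [heightF_zero]
  | succ t ih =>
    rw [heightF_succ, heightF_succ, ih (by omega)]
    by_cases h : t < L
    · rw [dif_pos h, dif_pos h, flipBefore_of_lt ε (show t < c by omega)]
      cases ε ⟨t, h⟩ <;> simp [add_comm]
    · simp [h]

lemma heightF_flipBefore_of_ge (c : ℕ) (ε : Fin L → Bool) {t : ℕ} (ht : c ≤ t) :
    heightF (flipBefore c ε) t = heightF ε t - 2 * heightF ε c := by
  induction t, ht using Nat.le_induction with
  | base => rw [heightF_flipBefore_of_le c ε le_rfl]; ring
  | succ t hct ih =>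
    rw [heightF_succ, heightF_succ, ih]
    by_cases h : t < L
    · rw [dif_pos h, dif_pos h, flipBefore_of_ge ε (show c ≤ t from hct)]
      ring
    · simp [h]

def downCount (ε : Fin L → Bool) : ℕ := #{i | ε i = false}

lemma heightF_length (ε : Fin L → Bool) : heightF ε L = L - 2 * downCount ε := by
  have hsum : heightF ε L = ∑ i : Fin L, (1 - 2 * if ε i = false then (1 : ℤ) else 0) := by
    rw [heightF, ← Fin.sum_univ_eq_sum_range]
    refine sum_congr rfl fun i _ => ?_
    rw [dif_pos i.isLt]
    cases ε i <;> norm_num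
  rw [hsum, sum_sub_distrib, ← mul_sum, sum_boole]
  simp [downCount]

lemma card_downCount_eq (L k : ℕ) : #{ε : Fin L → Bool | downCount ε = k} = L.choose k := by
  rw [← card_fin L, ← card_powersetCard, card_fin]
  refine card_bij' (fun ε _ => ({i | ε i = false} : Finset (Fin L)))
    (fun S _ i => decide (i ∉ S)) ?_ ?_ ?_ ?_
  · intro ε hε
    rw [mem_filter] at hε
    exact mem_powersetCard.mpr ⟨subset_univ _, hε.2⟩
  · intro S hS
    rw [mem_filter, downCount, ← (mem_powersetCard.mp hS).2]
    refine ⟨mem_univ _, congr_arg card ?_⟩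
    ext i
    simp
  · intro ε _
    funext i
    cases h : ε i <;> simp [h]
  · intro S _
    ext i
    simp

def reflectAt (a : ℤ) (ε : Fin L → Bool) : Fin L → Bool :=
  if h : ∃ t ≤ L, heightF ε t = a then flipBefore (Nat.find h) ε else ε

section Reflection

variable {a : ℤ} {ε : Fin L → Bool}

lemma heightF_reflectAt (h : ∃ t ≤ L, heightF ε t = a) :
    heightF (reflectAt a ε) L = heightF ε L - 2 * a := by
  obtain ⟨hcL, hc⟩ := Nat.find_spec h
  rw [reflectAt, dif_pos h, heightF_flipBefore_of_ge _ _ hcL, hc]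

lemma exists_heightF_reflectAt_eq_neg (h : ∃ t ≤ L, heightF ε t = a) :
    ∃ t ≤ L, heightF (reflectAt a ε) t = -a := by
  obtain ⟨hcL, hc⟩ := Nat.find_spec h
  exact ⟨_, hcL, by rw [reflectAt, dif_pos h, heightF_flipBefore_of_le _ _ le_rfl, hc]⟩

lemma reflectAt_neg_reflectAt (h : ∃ t ≤ L, heightF ε t = a) :
    reflectAt (-a) (reflectAt a ε) = ε := by
  have h' := exists_heightF_reflectAt_eq_neg h
  have hfind : Nat.find h' = Nat.find h := by
    rw [Nat.find_eq_iff]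
    refine ⟨?_, fun n hn ⟨hnL, hna⟩ => Nat.find_min h hn ⟨hnL, ?_⟩⟩
    · obtain ⟨hcL, hc⟩ := Nat.find_spec h
      rw [reflectAt, dif_pos h, heightF_flipBefore_of_le _ _ le_rfl, hc]
      exact ⟨hcL, rfl⟩
    · rw [reflectAt, dif_pos h, heightF_flipBefore_of_le _ _ hn.le] at hna
      omega
  rw [reflectAt, dif_pos h', hfind, reflectAt, dif_pos h, flipBefore_flipBefore]

end Reflection

lemma nonneg_iff_not_exists_heightF_eq_neg_one (ε : Fin L → Bool) :
    (∀ t ≤ L, 0 ≤ heightF ε t) ↔ ¬∃ t ≤ L, heightF ε t = -1 := by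
  constructor
  · rintro hnonneg ⟨t, htL, ht⟩
    linarith [hnonneg t htL]
  · intro hvisit t htL
    by_contra! hneg
    obtain ⟨u, hut, hu⟩ :=
      exists_heightF_eq_of_ge (a := -1) (by norm_num) (by omega : heightF ε t ≤ -1)
    exact hvisit ⟨u, hut.trans htL, hu⟩

lemma exists_heightF_eq_one {ε : Fin L → Bool} (hε : 2 * downCount ε < L) :
    ∃ t ≤ L, heightF ε t = 1 :=
  exists_heightF_eq_of_le zero_le_one (by rw [heightF_length]; omega)

/-- The reflection principle: reversing the steps before the first visit to `-1` is a bijection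
onto the walks with one down step fewer. -/
lemma card_downCount_eq_succ_and_exists_heightF_eq_neg_one {d : ℕ} (hd : 2 * d < L) :
    #{ε : Fin L → Bool | downCount ε = d + 1 ∧ ∃ t ≤ L, heightF ε t = -1} = L.choose d := by
  rw [← card_downCount_eq L d]
  refine card_bij' (fun ε _ => reflectAt (-1) ε) (fun η _ => reflectAt 1 η) ?_ ?_ ?_ ?_
  · intro ε hε
    obtain ⟨hdown, hvisit⟩ := (mem_filter.mp hε).2
    have hend := heightF_reflectAt hvisit
    rw [heightF_length, heightF_length, hdown] at hend
    exact mem_filter.mpr ⟨mem_univ _, by push_cast at hend; omega⟩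
  · intro η hη
    have hdown := (mem_filter.mp hη).2
    have hvisit := exists_heightF_eq_one (hdown ▸ hd)
    have hend := heightF_reflectAt hvisit
    rw [heightF_length, heightF_length, hdown] at hend
    exact mem_filter.mpr ⟨mem_univ _, by omega, exists_heightF_reflectAt_eq_neg hvisit⟩
  · intro ε hε
    simpa using reflectAt_neg_reflectAt (mem_filter.mp hε).2.2
  · intro η hη
    exact reflectAt_neg_reflectAt (exists_heightF_eq_one ((mem_filter.mp hη).2 ▸ hd))

end Walk

lemma T_eq_card (m l : ℕ) :
    T m l = #{ε : Fin (l + 2 * m) → Bool |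
      downCount ε = m ∧ ∀ t ≤ l + 2 * m, 0 ≤ heightF ε t} := by
  refine congr_arg card (filter_congr fun ε _ => and_congr_left fun _ => ?_)
  rw [heightF_length]
  omega

lemma T_zero_left (l : ℕ) : T 0 l = 1 := by
  rw [T_eq_card, ← Nat.choose_zero_right (l + 2 * 0), ← card_downCount_eq]
  refine congr_arg card (filter_congr fun ε _ => and_iff_left_of_imp fun hdown t _ => ?_)
  have hup : ∀ i, ε i = true := by
    simpa [downCount, filter_eq_empty_iff] using hdown
  exact sum_nonneg fun i _ => by split_ifs <;> simp_all

lemma T_succ_add_choose (m l : ℕ) :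
    T (m + 1) l + (l + 2 * (m + 1)).choose m = (l + 2 * (m + 1)).choose (m + 1) := by
  have hsplit := card_filter_add_card_filter_not
    (s := {ε : Fin (l + 2 * (m + 1)) → Bool | downCount ε = m + 1})
    (fun ε => ∀ t ≤ l + 2 * (m + 1), 0 ≤ heightF ε t)
  rw [filter_filter, filter_filter, card_downCount_eq] at hsplit
  rw [T_eq_card, ← hsplit,
    ← card_downCount_eq_succ_and_exists_heightF_eq_neg_one (by omega : 2 * m < l + 2 * (m + 1))]
  exact congr_arg _ (congr_arg card (filter_congr fun ε _ =>
    and_congr_right fun _ => (nonneg_iff_not_exists_heightF_eq_neg_one ε).not_left.symm))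

lemma add_add_one_mul_T (m l : ℕ) : (m + l + 1) * T m l = (l + 1) * (l + 2 * m).choose m := by
  cases m with
  | zero => simp [T_zero_left]
  | succ m =>
    have hsucc := T_succ_add_choose m l
    have hchoose := Nat.choose_succ_right_eq (l + 2 * (m + 1)) m
    rw [show l + 2 * (m + 1) - m = l + m + 2 by omega] at hchoose
    zify at hsucc hchoose ⊢
    linear_combination (↑m + ↑l + 2 : ℤ) * hsucc + hchoose

lemma sub_div_add_le_exp {s q : ℝ} (hq : 0 ≤ q) (hqs : q + 1 ≤ s) :
    (s - q) / (s + q + 1) ≤ Real.exp (-((2 * q + 1) / (2 * s))) := by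
  have hden : 0 < s + q + 1 := by linarith
  calc (s - q) / (s + q + 1) = -((2 * q + 1) / (s + q + 1)) + 1 := by field_simp; ring
    _ ≤ Real.exp (-((2 * q + 1) / (s + q + 1))) := Real.add_one_le_exp _
    _ ≤ Real.exp (-((2 * q + 1) / (2 * s))) := by gcongr; linarith

lemma choose_sub_le_exp_mul_choose {s q : ℕ} (hq : q ≤ s) :
    ((2 * s).choose (s - q) : ℝ) ≤ Real.exp (-(q ^ 2 / (2 * s))) * (2 * s).choose s := by
  induction q with
  | zero => simp
  | succ q ih =>
    have hstepN := Nat.choose_succ_right_eq (2 * s) (s - (q + 1))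
    rw [show s - (q + 1) + 1 = s - q by omega, show 2 * s - (s - (q + 1)) = s + q + 1 by omega]
      at hstepN
    have hstep : ((2 * s).choose (s - (q + 1)) : ℝ) * (s + q + 1) =
        (2 * s).choose (s - q) * (s - q) := by
      rw [← Nat.cast_sub (by omega)]
      exact_mod_cast hstepN.symm
    have hden : (0 : ℝ) < s + q + 1 := by positivity
    calc ((2 * s).choose (s - (q + 1)) : ℝ)
        = (2 * s).choose (s - q) * ((s - q) / (s + q + 1)) := by
          rw [mul_div_assoc', eq_div_iff hden.ne', hstep]
      _ ≤ Real.exp (-(q ^ 2 / (2 * s))) * (2 * s).choose s *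
            Real.exp (-((2 * q + 1) / (2 * s))) := by
          gcongr
          · exact div_nonneg (sub_nonneg.mpr (by exact_mod_cast (by omega : q ≤ s))) hden.le
          · exact ih (by omega)
          · exact sub_div_add_le_exp (Nat.cast_nonneg q) (by exact_mod_cast hq)
      _ = Real.exp (-(((q + 1 : ℕ) : ℝ) ^ 2 / (2 * s))) * (2 * s).choose s := by
          rw [mul_right_comm, ← Real.exp_add]
          push_cast
          ring_nf

lemma T_le_mul_exp_mul_T_zero (m q : ℕ) :
    (T m (2 * q) : ℝ) ≤ (2 * q + 1) * Real.exp (-(q ^ 2 / (2 * (m + q)))) * T (m + q) 0 := by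
  have hT : ((m + q : ℝ) + q + 1) * T m (2 * q) = (2 * q + 1) * (2 * (m + q)).choose m := by
    have := add_add_one_mul_T m (2 * q)
    rw [show m + 2 * q + 1 = m + q + q + 1 by ring, show 2 * q + 2 * m = 2 * (m + q) by ring]
      at this
    exact_mod_cast this
  have hT0 : ((m + q : ℝ) + 1) * T (m + q) 0 = (2 * (m + q)).choose (m + q) := by
    have := add_add_one_mul_T (m + q) 0
    simp only [add_zero, zero_add, one_mul] at this
    exact_mod_cast this
  have hchoose := choose_sub_le_exp_mul_choose (s := m + q) (q := q) (by omega)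
  rw [Nat.add_sub_cancel] at hchoose
  push_cast at hchoose
  calc (T m (2 * q) : ℝ) = (2 * q + 1) * (2 * (m + q)).choose m / ((m + q : ℝ) + q + 1) := by
        rw [eq_div_iff (by positivity), mul_comm, hT]
    _ ≤ (2 * q + 1) * (Real.exp (-(q ^ 2 / (2 * (m + q)))) * (2 * (m + q)).choose (m + q)) /
          ((m + q : ℝ) + 1) := by
        gcongr (2 * q + 1 : ℝ) * ?_ / ?_
        linarith [(Nat.cast_nonneg q : (0 : ℝ) ≤ q)]
    _ = (2 * q + 1) * Real.exp (-(q ^ 2 / (2 * (m + q)))) * T (m + q) 0 := by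
        rw [← hT0]
        field_simp

/-- There is a universal constant `C₀ > 0` such that for all `m` and even `l` with
`s = m + l/2 ≥ 1`, one has `T_{m,l} ≤ (l+1) exp(-C₀ l²/s) T_{s,0}`. -/
theorem T_le_exp_mul_T_dyck :
    ∃ C0 : ℝ, 0 < C0 ∧ ∀ (m q : ℕ), 1 ≤ m + q →
      (T m (2 * q) : ℝ) ≤
        ((2 * q : ℕ) + 1) * Real.exp (-(C0 * (2 * q : ℕ) ^ 2 / (m + q : ℕ))) * T (m + q) 0 := by
  refine ⟨1 / 8, by norm_num, fun m q _ => ?_⟩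
  convert T_le_mul_exp_mul_T_zero m q using 4
  · push_cast
    ring
  · push_cast
    rw [mul_comm 2, ← div_div]
    ring

end
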